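/- (Existence of sparse adversarial examples) Let ρ be a probability density on [0,1]ⁿ with support S, and R ⊂ [0,1]ⁿ measurable with vol[R] < 1/2. If ε ≥ √(n·log 2/2) and vol[S] ≥ exp(-(2/n)·(ε - √(n·log 2/2))²), then there exists x with ρ(x) > 0 and x̂ ∈ Rᶜ differing from x in at most ε coordinates. -/

import Mathlib

/-!
Fix a compact `K ⊆ supp ρ` of almost full volume and let `f x` be the Hamming distance from `x`
to `K`. Changing one coordinate moves `f` by at most one, so by McDiarmid's inequality (Hoeffding's
lemma applied one coordinate at a time) `f - 𝔼 f` is sub-Gaussian with variance proxy `n / 4` under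
the uniform measure on the cube. Since `f = 0` on `K`, the lower tail bounds `𝔼 f` in terms of
`vol K`; the upper tail then leaves less than half of the cube at distance `≥ ε` from `K`, whereas
`[0,1]ⁿ \ R` has volume more than one half. Compactness of `K` makes `f` lower semicontinuous,
hence measurable.
-/

open Real MeasureTheory

/-- The Hamming (ℓ₀) distance on ℝⁿ: the number of differing coordinates. -/
noncomputable def l0Dist {n : ℕ} (x y : Fin n → ℝ) : ℕ :=
  (Finset.univ.filter fun i => x i ≠ y i).card

open ProbabilityTheory Finset
open scoped NNReal ENNReal Topology

lemma l0Dist_eq_hammingDist {n : ℕ} (x y : Fin n → ℝ) : l0Dist x y = hammingDist x y := rfl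

lemma ProbabilityTheory.HasSubgaussianMGF.lt_of_ofReal_exp_lt {Ω : Type*} [MeasurableSpace Ω]
    {μ : Measure Ω} [IsFiniteMeasure μ] {X : Ω → ℝ} {σ : ℝ≥0} (h : HasSubgaussianMGF X σ μ)
    {u s : ℝ} (hu : 0 ≤ u) (hs : ENNReal.ofReal (exp (-u ^ 2 / (2 * σ))) < μ {ω | s ≤ X ω}) :
    s < u := by
  by_contra! hus
  refine (hs.trans_le ?_).false
  rw [← ofReal_measureReal]
  gcongr
  calc _ ≤ exp (-s ^ 2 / (2 * σ)) := h.measure_ge_le (hu.trans hus)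
    _ ≤ exp (-u ^ 2 / (2 * σ)) := by gcongr

section BoundedDifferences

variable {α : Type*}

def HasBoundedDifferences {ι : Type*} [DecidableEq ι] (f : (ι → α) → ℝ) (c : ι → ℝ≥0) : Prop :=
  ∀ x i a, f (Function.update x i a) - f x ≤ c i

lemma exists_forall_mem_Icc_of_sub_le {g : α → ℝ} {c : ℝ} (hg : ∀ a b, g a - g b ≤ c) :
    ∃ m, ∀ a, g a ∈ Set.Icc m (m + c) := by
  cases isEmpty_or_nonempty α with
  | inl _ => exact ⟨0, isEmptyElim⟩
  | inr _ =>
    have hbdd : BddBelow (Set.range g) :=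
      ⟨g (Classical.arbitrary α) - c, by
        rintro _ ⟨a, rfl⟩; linarith [hg (Classical.arbitrary α) a]⟩
    refine ⟨⨅ a, g a, fun a => ⟨ciInf_le hbdd a, ?_⟩⟩
    have : g a - c ≤ ⨅ b, g b := le_ciInf fun b => by linarith [hg a b]
    linarith

lemma HasBoundedDifferences.finCons_sub_finCons_le {n : ℕ} {f : (Fin (n + 1) → α) → ℝ}
    {c : Fin (n + 1) → ℝ≥0} (hfc : HasBoundedDifferences f c) (y : Fin n → α) (a b : α) :
    f (Fin.cons a y) - f (Fin.cons b y) ≤ c 0 := by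
  simpa [Fin.update_cons_zero] using hfc (Fin.cons b y) 0 a

variable [MeasurableSpace α]

lemma mgf_le_of_forall_sub_le {μ : Measure α} [IsProbabilityMeasure μ] {g : α → ℝ}
    (hg : Measurable g) {c : ℝ≥0} (hgc : ∀ a b, g a - g b ≤ c) (t : ℝ) :
    mgf g μ t ≤ exp (t * μ[g] + ((c / 2) ^ 2 : ℝ≥0) * t ^ 2 / 2) := by
  obtain ⟨m, hm⟩ := exists_forall_mem_Icc_of_sub_le hgc
  have hsub := (hasSubgaussianMGF_of_mem_Icc hg.aemeasurable (ae_of_all μ hm)).mgf_le t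
  have hshift : mgf g μ t = mgf (fun a => g a - μ[g]) μ t * exp (t * μ[g]) := by
    simp_rw [← mgf_add_const, sub_add_cancel]
  rw [hshift, exp_add, mul_comm (exp _)]
  gcongr
  simpa using hsub

lemma measurable_finCons {n : ℕ} :
    Measurable fun p : α × (Fin n → α) => (Fin.cons p.1 p.2 : Fin (n + 1) → α) := by
  convert (MeasurableEquiv.piFinSuccAbove (fun _ : Fin (n + 1) => α) 0).symm.measurable using 1
  ext p i
  simp [MeasurableEquiv.piFinSuccAbove_symm_apply, Fin.insertNthEquiv]

lemma integral_pi_eq_integral_integral_finCons {n : ℕ} {ν : Fin (n + 1) → Measure α}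
    [∀ i, SigmaFinite (ν i)] {g : (Fin (n + 1) → α) → ℝ}
    (hg : Integrable (fun p : α × (Fin n → α) => g (Fin.cons p.1 p.2))
      ((ν 0).prod (Measure.pi fun j => ν j.succ))) :
    ∫ x, g x ∂Measure.pi ν = ∫ y, ∫ a, g (Fin.cons a y) ∂ν 0 ∂Measure.pi fun j => ν j.succ := by
  rw [← (measurePreserving_piFinSuccAbove ν 0).symm.integral_comp', ← integral_prod_symm _ hg]
  simp [MeasurableEquiv.piFinSuccAbove_symm_apply, Fin.insertNthEquiv]

lemma HasBoundedDifferences.integral_finCons {n : ℕ} {f : (Fin (n + 1) → α) → ℝ}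
    {c : Fin (n + 1) → ℝ≥0} (hfc : HasBoundedDifferences f c) (hf : Measurable f) {B : ℝ}
    (hB : ∀ x, |f x| ≤ B) (μ : Measure α) [IsProbabilityMeasure μ] :
    HasBoundedDifferences (fun y => ∫ a, f (Fin.cons a y) ∂μ) (fun j => c j.succ) := by
  intro y j b
  have hint (y : Fin n → α) : Integrable (fun a => f (Fin.cons a y)) μ :=
    .of_bound (hf.comp (measurable_finCons.comp measurable_prodMk_right)).aestronglyMeasurable B
      (ae_of_all _ fun a => hB _)
  rw [← integral_sub (hint _) (hint _)]
  calc ∫ a, f (Fin.cons a (Function.update y j b)) - f (Fin.cons a y) ∂μ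
      ≤ ∫ _, (c j.succ : ℝ) ∂μ :=
        integral_mono ((hint _).sub (hint _)) (integrable_const _) fun a => by
          simpa [Fin.cons_update] using hfc (Fin.cons a y) j.succ b
    _ = c j.succ := by simp

theorem mgf_le_of_hasBoundedDifferences {n : ℕ} {ν : Fin n → Measure α}
    [∀ i, IsProbabilityMeasure (ν i)] {f : (Fin n → α) → ℝ} {c : Fin n → ℝ≥0}
    (hfc : HasBoundedDifferences f c) (hf : Measurable f) {B : ℝ} (hB : ∀ x, |f x| ≤ B) (t : ℝ) :
    mgf f (Measure.pi ν) t ≤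
      exp (t * ∫ x, f x ∂Measure.pi ν + (∑ i, (c i / 2) ^ 2 : ℝ≥0) * t ^ 2 / 2) := by
  induction n with
  | zero =>
    have hconst : f = fun _ => f isEmptyElim :=
      funext fun x => congrArg f (Subsingleton.elim _ _)
    rw [hconst]
    simp
  | succ n ih =>
    set μ' := Measure.pi fun j : Fin n => ν j.succ
    set g : (Fin n → α) → ℝ := fun y => ∫ a, f (Fin.cons a y) ∂ν 0
    set C : ℝ := ((c 0 / 2) ^ 2 : ℝ≥0) * t ^ 2 / 2
    have hF : Measurable fun p : α × (Fin n → α) => f (Fin.cons p.1 p.2) :=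
      hf.comp measurable_finCons
    have hg : Measurable g := hF.stronglyMeasurable.integral_prod_left'.measurable
    have hgB (y) : |g y| ≤ B := by
      simpa using norm_integral_le_of_norm_le_const (μ := ν 0)
        (f := fun a => f (Fin.cons a y)) (ae_of_all _ fun a => hB _)
    have hslice (y) : ∫ a, exp (t * f (Fin.cons a y)) ∂ν 0 ≤ exp (t * g y) * exp C := by
      rw [← exp_add]
      exact mgf_le_of_forall_sub_le (hF.comp measurable_prodMk_right)
        (hfc.finCons_sub_finCons_le y) t
    have hexp := integrable_exp_mul_of_mem_Icc (μ := (ν 0).prod μ') (t := t) hF.aemeasurable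
      (ae_of_all _ fun p => abs_le.1 (hB _))
    calc mgf f (Measure.pi ν) t = ∫ y, ∫ a, exp (t * f (Fin.cons a y)) ∂ν 0 ∂μ' :=
          integral_pi_eq_integral_integral_finCons hexp
      _ ≤ ∫ y, exp (t * g y) * exp C ∂μ' :=
          integral_mono hexp.integral_prod_right ((integrable_exp_mul_of_mem_Icc hg.aemeasurable
            (ae_of_all _ fun y => abs_le.1 (hgB y))).mul_const _) hslice
      _ = mgf g μ' t * exp C := integral_mul_const _ _
      _ ≤ exp (t * ∫ y, g y ∂μ' + (∑ j : Fin n, (c j.succ / 2) ^ 2 : ℝ≥0) * t ^ 2 / 2) *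
            exp C := by
          gcongr
          exact ih (hfc.integral_finCons hf hB (ν 0)) hg hgB
      _ = _ := by
          rw [← integral_pi_eq_integral_integral_finCons
            (.of_bound hF.aestronglyMeasurable B (ae_of_all _ fun p => hB _)),
            ← exp_add, Fin.sum_univ_succ]
          push_cast [C]
          ring_nf

theorem hasSubgaussianMGF_of_hasBoundedDifferences {n : ℕ} {ν : Fin n → Measure α}
    [∀ i, IsProbabilityMeasure (ν i)] {f : (Fin n → α) → ℝ} {c : Fin n → ℝ≥0}
    (hfc : HasBoundedDifferences f c) (hf : Measurable f) {B : ℝ} (hB : ∀ x, |f x| ≤ B) :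
    HasSubgaussianMGF (fun x => f x - ∫ x, f x ∂Measure.pi ν) (∑ i, (c i / 2) ^ 2)
      (Measure.pi ν) where
  integrable_exp_mul t := integrable_exp_mul_of_mem_Icc (hf.sub_const _).aemeasurable
    (ae_of_all _ fun x =>
      ⟨sub_le_sub_right (abs_le.1 (hB x)).1 _, sub_le_sub_right (abs_le.1 (hB x)).2 _⟩)
  mgf_le t := by
    simp_rw [sub_eq_add_neg, mgf_add_const]
    calc _ ≤ exp (t * ∫ x, f x ∂Measure.pi ν + (∑ i, (c i / 2) ^ 2 : ℝ≥0) * t ^ 2 / 2) *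
          exp (t * -∫ x, f x ∂Measure.pi ν) := by
          gcongr
          exact mgf_le_of_hasBoundedDifferences hfc hf hB t
      _ = _ := by rw [← exp_add]; ring_nf

theorem sub_lt_add_of_hasBoundedDifferences {n : ℕ} {ν : Fin n → Measure α}
    [∀ i, IsProbabilityMeasure (ν i)] {f : (Fin n → α) → ℝ} {c : Fin n → ℝ≥0}
    (hfc : HasBoundedDifferences f c) (hf : Measurable f) {B : ℝ} (hB : ∀ x, |f x| ≤ B)
    {a b u v : ℝ} (hu : 0 ≤ u) (hv : 0 ≤ v)
    (ha : ENNReal.ofReal (exp (-u ^ 2 / (2 * (∑ i, (c i / 2) ^ 2 : ℝ≥0)))) <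
      Measure.pi ν {x | f x ≤ a})
    (hb : ENNReal.ofReal (exp (-v ^ 2 / (2 * (∑ i, (c i / 2) ^ 2 : ℝ≥0)))) <
      Measure.pi ν {x | b ≤ f x}) :
    b - a < u + v := by
  have h := hasSubgaussianMGF_of_hasBoundedDifferences (ν := ν) hfc hf hB
  have hlow := h.neg.lt_of_ofReal_exp_lt (s := ∫ x, f x ∂Measure.pi ν - a) hu
    (ha.trans_le (measure_mono fun x (hx : f x ≤ a) => show _ ≤ -(f x - _) by linarith))
  have hupp := h.lt_of_ofReal_exp_lt (s := b - ∫ x, f x ∂Measure.pi ν) hv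
    (hb.trans_le (measure_mono fun x (hx : b ≤ f x) => show _ ≤ f x - _ by linarith))
  linarith

end BoundedDifferences

section InfHammingDist

variable {ι β : Type*} [Fintype ι] [DecidableEq β] {K : Set (ι → β)}

noncomputable def infHammingDist (x : ι → β) (K : Set (ι → β)) : ℕ :=
  sInf (hammingDist x '' K)

lemma infHammingDist_le_hammingDist {x s : ι → β} (hs : s ∈ K) :
    infHammingDist x K ≤ hammingDist x s :=
  Nat.sInf_le ⟨s, hs, rfl⟩

lemma exists_hammingDist_eq_infHammingDist (hK : K.Nonempty) (x : ι → β) :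
    ∃ s ∈ K, hammingDist x s = infHammingDist x K :=
  Nat.sInf_mem (hK.image _)

lemma infHammingDist_eq_zero_of_mem {x : ι → β} (hx : x ∈ K) : infHammingDist x K = 0 :=
  Nat.eq_zero_of_le_zero ((infHammingDist_le_hammingDist hx).trans_eq (hammingDist_self x))

lemma infHammingDist_le_card (x : ι → β) (K : Set (ι → β)) :
    infHammingDist x K ≤ Fintype.card ι := by
  rcases K.eq_empty_or_nonempty with rfl | ⟨s, hs⟩
  · simp [infHammingDist]
  · exact (infHammingDist_le_hammingDist hs).trans hammingDist_le_card_fintype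

lemma hammingDist_update_le [DecidableEq ι] (x : ι → β) (i : ι) (b : β) :
    hammingDist (Function.update x i b) x ≤ 1 := by
  refine (card_le_card fun j hj => ?_).trans (card_singleton i).le
  by_contra hji
  simp_all [Function.update_of_ne (Finset.notMem_singleton.1 hji)]

lemma infHammingDist_update_le [DecidableEq ι] (x : ι → β) (i : ι) (b : β) :
    infHammingDist (Function.update x i b) K ≤ infHammingDist x K + 1 := by
  rcases K.eq_empty_or_nonempty with rfl | hK
  · simp [infHammingDist]
  obtain ⟨s, hs, hxs⟩ := exists_hammingDist_eq_infHammingDist hK x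
  calc infHammingDist (Function.update x i b) K ≤ hammingDist (Function.update x i b) s :=
        infHammingDist_le_hammingDist hs
    _ ≤ hammingDist (Function.update x i b) x + hammingDist x s := hammingDist_triangle _ _ _
    _ ≤ infHammingDist x K + 1 := by rw [hxs, add_comm]; gcongr; exact hammingDist_update_le x i b

lemma hasBoundedDifferences_infHammingDist [DecidableEq ι] (K : Set (ι → β)) :
    HasBoundedDifferences (fun x => (infHammingDist x K : ℝ)) 1 := fun x i b => by
  have := infHammingDist_update_le (K := K) x i b
  simp only [Pi.one_apply, NNReal.coe_one, tsub_le_iff_left]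
  exact_mod_cast this

lemma setOf_infHammingDist_le_eq (hK : K.Nonempty) (k : ℕ) :
    {x | infHammingDist x K ≤ k} = ⋃ T ∈ {T : Finset ι | #T ≤ k},
      (fun x (j : {i // i ∉ T}) => x j) ⁻¹' ((fun x (j : {i // i ∉ T}) => x j) '' K) := by
  ext x
  simp only [Set.mem_ofPred_eq, Set.mem_iUnion, Set.mem_preimage, Set.mem_image, exists_prop]
  constructor
  · intro hx
    obtain ⟨s, hs, hxs⟩ := exists_hammingDist_eq_infHammingDist hK x
    refine ⟨({i | x i ≠ s i} : Finset ι), hxs.trans_le hx, s, hs, funext fun j => ?_⟩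
    simpa [eq_comm] using j.2
  · rintro ⟨T, hT, s, hs, hsx⟩
    refine (infHammingDist_le_hammingDist hs).trans (le_trans (card_le_card fun i hi => ?_) hT)
    by_contra hiT
    exact (mem_filter.1 hi).2 (congrFun hsx ⟨i, hiT⟩).symm

variable [TopologicalSpace β] [T2Space β]

lemma lowerSemicontinuous_infHammingDist (hK : IsCompact K) :
    LowerSemicontinuous (infHammingDist · K) := by
  rcases K.eq_empty_or_nonempty with rfl | hne
  · simpa [infHammingDist] using lowerSemicontinuous_const
  refine lowerSemicontinuous_iff_isClosed_preimage.2 fun k => ?_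
  change IsClosed {x | infHammingDist x K ≤ k}
  rw [setOf_infHammingDist_le_eq hne]
  refine (Set.toFinite _).isClosed_biUnion fun T _ => ?_
  have hcont : Continuous fun (x : ι → β) (j : {i // i ∉ T}) => x j :=
    continuous_pi fun j => continuous_apply _
  exact (hK.image hcont).isClosed.preimage hcont

lemma measurable_infHammingDist [MeasurableSpace β] [OpensMeasurableSpace (ι → β)]
    (hK : IsCompact K) :
    Measurable fun x => (infHammingDist x K : ℝ) :=
  measurable_from_top.comp (lowerSemicontinuous_infHammingDist hK).measurable

end InfHammingDist

instance : IsProbabilityMeasure (volume.restrict (Set.Icc (0 : ℝ) 1)) := ⟨by simp⟩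

lemma volume_restrict_Icc_eq_pi {ι : Type*} [Fintype ι] (a b : ι → ℝ) :
    (volume : Measure (ι → ℝ)).restrict (Set.Icc a b) =
      Measure.pi fun i => volume.restrict (Set.Icc (a i) (b i)) := by
  rw [← Set.pi_univ_Icc, volume_pi, Measure.restrict_pi_pi]

theorem exists_hammingDist_lt_of_lt_volume {n : ℕ} {K B : Set (Fin n → ℝ)} (hK : IsCompact K)
    (hKc : K ⊆ Set.Icc 0 1) (hBc : B ⊆ Set.Icc 0 1) {u v : ℝ} (hu : 0 ≤ u) (hv : 0 ≤ v)
    (hKvol : ENNReal.ofReal (exp (-(2 / n) * u ^ 2)) < volume K)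
    (hBvol : ENNReal.ofReal (exp (-(2 / n) * v ^ 2)) < volume B) :
    ∃ s ∈ K, ∃ x ∈ B, (hammingDist s x : ℝ) < u + v := by
  have hμ {A : Set (Fin n → ℝ)} (hA : A ⊆ Set.Icc 0 1) :
      volume A = Measure.pi (fun _ => volume.restrict (Set.Icc 0 1)) A := by
    have hpi := volume_restrict_Icc_eq_pi (0 : Fin n → ℝ) 1
    simp only [Pi.zero_apply, Pi.one_apply] at hpi
    rw [← hpi, Measure.restrict_apply' measurableSet_Icc, Set.inter_eq_left.2 hA]
  have hσ (w : ℝ) :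
      -(2 / n) * w ^ 2 = -w ^ 2 / (2 * (∑ i : Fin n, ((1 : Fin n → ℝ≥0) i / 2) ^ 2 : ℝ≥0)) := by
    simp only [Pi.one_apply, sum_const, card_univ, Fintype.card_fin, nsmul_eq_mul,
      NNReal.coe_mul, NNReal.coe_natCast, NNReal.coe_pow, NNReal.coe_div, NNReal.coe_one,
      NNReal.coe_ofNat]
    ring
  have hKne : K.Nonempty := nonempty_of_measure_ne_zero (ne_bot_of_gt hKvol)
  -- otherwise `infHammingDist · K` is `0` on `K` and `≥ u + v` on `B`, too spread out for McDiarmid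
  by_contra! hfar
  have := sub_lt_add_of_hasBoundedDifferences (ν := fun _ => volume.restrict (Set.Icc 0 1))
    (hasBoundedDifferences_infHammingDist K)
    (measurable_infHammingDist hK) (B := n) (fun x => by simpa using infHammingDist_le_card x K)
    (a := 0) (b := u + v) hu hv ?_ ?_
  · linarith
  · rw [← hσ]
    refine (hμ hKc ▸ hKvol).trans_le (measure_mono fun s hs => ?_)
    simp [infHammingDist_eq_zero_of_mem hs]
  · rw [← hσ]
    refine (hμ hBc ▸ hBvol).trans_le (measure_mono fun x hx => ?_)
    obtain ⟨s, hs, hxs⟩ := exists_hammingDist_eq_infHammingDist hKne x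
    have := hfar s hs x hx
    rwa [hammingDist_comm, hxs] at this

lemma exists_lt_sqrt_and_ofReal_exp_lt {n : ℕ} (hn : 0 < n) {b : ℝ≥0∞}
    (hb : ENNReal.ofReal (1 / 2) < b) :
    ∃ v, 0 ≤ v ∧ v < √(n * log 2 / 2) ∧ ENNReal.ofReal (exp (-(2 / n) * v ^ 2)) < b := by
  have hc : 0 < √(n * log 2 / 2) := by positivity
  have hhalf : ENNReal.ofReal (exp (-(2 / n) * √(n * log 2 / 2) ^ 2)) = ENNReal.ofReal (1 / 2) := by
    rw [sq_sqrt (by positivity), show -(2 / n : ℝ) * (n * log 2 / 2) = -log 2 by field_simp,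
      exp_neg, exp_log two_pos, one_div]
  have hnear : ∀ᶠ v in 𝓝 √(n * log 2 / 2), ENNReal.ofReal (exp (-(2 / n) * v ^ 2)) < b :=
    ContinuousAt.eventually_lt (ENNReal.continuous_ofReal.comp (by fun_prop)).continuousAt
      continuousAt_const (hhalf ▸ hb)
  obtain ⟨v, hvb, hv⟩ := ((hnear.filter_mono nhdsWithin_le_nhds).and (Ioo_mem_nhdsLT hc)).exists
  exact ⟨v, hv.1.le, hv.2, hvb⟩

lemma ofReal_half_lt_volume_Icc_diff {ι : Type*} [Fintype ι] {R : Set (ι → ℝ)}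
    (hR : volume R < ENNReal.ofReal (1 / 2)) :
    ENNReal.ofReal (1 / 2) < volume (Set.Icc (0 : ι → ℝ) 1 \ R) := by
  have hhalf : ENNReal.ofReal (1 / 2) + ENNReal.ofReal (1 / 2) = 1 := by
    rw [← ENNReal.ofReal_add] <;> norm_num
  calc ENNReal.ofReal (1 / 2) < volume (Set.Icc (0 : ι → ℝ) 1) - volume R := by
        rw [Real.volume_Icc_pi]
        simp only [Pi.one_apply, Pi.zero_apply, sub_zero, ENNReal.ofReal_one, Finset.prod_const_one]
        rw [← hhalf]
        exact lt_tsub_iff_right.2 (ENNReal.add_lt_add_left ENNReal.ofReal_ne_top hR)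
    _ ≤ volume (Set.Icc (0 : ι → ℝ) 1 \ R) := le_measure_sdiff

theorem existence_of_sparse_adversarial_examples_general (n : ℕ) (ρ : (Fin n → ℝ) → ℝ)
    (hρmeas : Measurable ρ) (hρ0 : ∀ x, 0 ≤ ρ x)
    (hρsupp : Function.support ρ ⊆ Set.Icc (0 : Fin n → ℝ) 1)
    (R : Set (Fin n → ℝ))
    (hRvol : volume R < ENNReal.ofReal (1 / 2))
    (ε : ℝ) (hε : ε ≥ Real.sqrt (n * Real.log 2 / 2))
    (hS : volume (Function.support ρ) ≥
      ENNReal.ofReal (Real.exp (-(2 / n) * (ε - Real.sqrt (n * Real.log 2 / 2)) ^ 2))) :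
    ∃ x, 0 < ρ x ∧ ∃ x' ∈ Set.Icc (0 : Fin n → ℝ) 1 \ R, (l0Dist x x' : ℝ) ≤ ε := by
  have hpos {x} (hx : x ∈ Function.support ρ) : 0 < ρ x := (hρ0 x).lt_of_ne' hx
  have hcompl := ofReal_half_lt_volume_Icc_diff hRvol
  rcases Nat.eq_zero_or_pos n with rfl | hn
  · obtain ⟨s, hs⟩ :=
      nonempty_of_measure_ne_zero ((ENNReal.ofReal_pos.2 (exp_pos _)).trans_le hS).ne'
    obtain ⟨x, hx⟩ := nonempty_of_measure_ne_zero (ne_bot_of_gt hcompl)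
    exact ⟨s, hpos hs, x, hx, by simpa [l0Dist] using (sqrt_nonneg _).trans hε⟩
  -- the slack `v < √(n log 2 / 2)` pays for approximating the support from inside by a compact set
  obtain ⟨v, hv0, hvc, hvB⟩ := exists_lt_sqrt_and_ofReal_exp_lt hn hcompl
  have hSvol : ENNReal.ofReal (exp (-(2 / n) * (ε - v) ^ 2)) < volume (Function.support ρ) := by
    refine hS.trans_lt' ((ENNReal.ofReal_lt_ofReal_iff (exp_pos _)).2 (exp_lt_exp.2 ?_))
    have hsq : (ε - √(n * log 2 / 2)) ^ 2 < (ε - v) ^ 2 :=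
      pow_lt_pow_left₀ (by linarith) (sub_nonneg.2 hε) two_ne_zero
    have : (0 : ℝ) < 2 / n := by positivity
    nlinarith
  obtain ⟨K, hKS, hK, hKvol⟩ := (measurableSet_support hρmeas).exists_lt_isCompact_of_ne_top
    ((measure_mono hρsupp).trans_lt isCompact_Icc.measure_lt_top).ne hSvol
  obtain ⟨s, hs, x, hx, hsx⟩ := exists_hammingDist_lt_of_lt_volume hK (hKS.trans hρsupp)
    Set.sdiff_subset (by linarith) hv0 hKvol hvB
  exact ⟨s, hpos (hKS hs), x, hx, by rw [l0Dist_eq_hammingDist]; linarith⟩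

theorem existence_of_sparse_adversarial_examples (n : ℕ) (ρ : (Fin n → ℝ) → ℝ)
    (hρmeas : Measurable ρ) (hρ0 : ∀ x, 0 ≤ ρ x)
    (hρsupp : Function.support ρ ⊆ Set.Icc (0 : Fin n → ℝ) 1)
    (hρint : ∫ x in Set.Icc (0 : Fin n → ℝ) 1, ρ x = 1)
    (R : Set (Fin n → ℝ)) (hR : MeasurableSet R) (hRsub : R ⊆ Set.Icc 0 1)
    (hRvol : volume R < ENNReal.ofReal (1 / 2))
    (ε : ℝ) (hε : ε ≥ Real.sqrt (n * Real.log 2 / 2))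
    (hS : volume (Function.support ρ) ≥
      ENNReal.ofReal (Real.exp (-(2 / n) * (ε - Real.sqrt (n * Real.log 2 / 2)) ^ 2))) :
    ∃ x, 0 < ρ x ∧ ∃ x' ∈ Set.Icc (0 : Fin n → ℝ) 1 \ R, (l0Dist x x' : ℝ) ≤ ε :=
  existence_of_sparse_adversarial_examples_general n ρ hρmeas hρ0 hρsupp R hRvol ε hε hS
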